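/- arXiv:2501.19105 — 3 statements merged into one kernel-verified Lean document; each statement's English description precedes it below -/
import Mathlib

section
/- Let X be a random variable with finite support 𝒳 in which every point has positive probability, let h_s: 𝒳 → ℝ^{d_s} and h_w: 𝒳 → ℝ^{d_w} be maps, let g: 𝒳 → (0,1), let f_w: ℝ^{d_w} → (0,1), and let 𝓕 be a convex set of functions ℝ^{d_s} → (0,1) such that g = f_* ∘ h_s for some f_* ∈ 𝓕. Then for every ε > 0 there exists δ > 0 such that every f_s ∈ 𝓕 satisfying E[D_KL(f_s(h_s(X)) ‖ f_w(h_w(X)))] ≤ inf_{f ∈ 𝓕} E[D_KL(f(h_s(X)) ‖ f_w(h_w(X)))] + δ also satisfies E[XE(g(X) ‖ f_s(h_s(X)))] ≤ E[XE(g(X) ‖ f_w(h_w(X)))] − E[D_KL(f_s(h_s(X)) ‖ f_w(h_w(X)))] + ε. -/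
open Real

/-- Binary KL divergence `D_KL(p ‖ q) = p log(p/q) + (1−p) log((1−p)/(1−q))`. -/
noncomputable def klBin (p q : ℝ) : ℝ :=
  p * Real.log (p / q) + (1 - p) * Real.log ((1 - p) / (1 - q))

/-- Binary cross-entropy `XE(p ‖ q) = −p log q − (1−p) log(1−q)`. -/
noncomputable def xeBin (p q : ℝ) : ℝ :=
  -(p * Real.log q) - (1 - p) * Real.log (1 - q)

lemma klBin_expand {p q : ℝ} (hp : p ∈ Set.Ioo (0:ℝ) 1) (hq : q ∈ Set.Ioo (0:ℝ) 1) :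
    klBin p q = p * Real.log p - p * Real.log q
      + (1 - p) * Real.log (1 - p) - (1 - p) * Real.log (1 - q) := by
  obtain ⟨hp0, hp1⟩ := hp
  obtain ⟨hq0, hq1⟩ := hq
  rw [klBin, Real.log_div hp0.ne' hq0.ne',
    Real.log_div (by linarith : (1:ℝ) - p ≠ 0) (by linarith : (1:ℝ) - q ≠ 0)]
  ring

lemma klBin_nonneg {p q : ℝ} (hp : p ∈ Set.Ioo (0:ℝ) 1) (hq : q ∈ Set.Ioo (0:ℝ) 1) :
    0 ≤ klBin p q := by
  obtain ⟨hp0, hp1⟩ := hp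
  obtain ⟨hq0, hq1⟩ := hq
  have h1 : Real.log (q / p) ≤ q / p - 1 :=
    Real.log_le_sub_one_of_pos (div_pos hq0 hp0)
  have h2 : Real.log ((1 - q) / (1 - p)) ≤ (1 - q) / (1 - p) - 1 :=
    Real.log_le_sub_one_of_pos (div_pos (by linarith) (by linarith))
  have e1 : Real.log (q / p) = Real.log q - Real.log p := Real.log_div hq0.ne' hp0.ne'
  have e2 : Real.log ((1 - q) / (1 - p)) = Real.log (1 - q) - Real.log (1 - p) :=
    Real.log_div (by linarith : (1:ℝ) - q ≠ 0) (by linarith : (1:ℝ) - p ≠ 0)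
  have e3 : p * (q / p - 1) = q - p := by field_simp
  have e4 : (1 - p) * ((1 - q) / (1 - p) - 1) = p - q := by
    have hne : (1:ℝ) - p ≠ 0 := by linarith
    rw [mul_sub, mul_one, ← mul_div_assoc, mul_div_cancel_left₀ _ hne]
    ring
  rw [klBin_expand ⟨hp0, hp1⟩ ⟨hq0, hq1⟩]
  have h1' : p * (Real.log q - Real.log p) ≤ q - p := by
    rw [← e1, ← e3]; exact mul_le_mul_of_nonneg_left h1 hp0.le
  have h2' : (1 - p) * (Real.log (1 - q) - Real.log (1 - p)) ≤ p - q := by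
    rw [← e2, ← e4]; exact mul_le_mul_of_nonneg_left h2 (by linarith)
  nlinarith [h1', h2']

lemma xeBin_eq {p q : ℝ} (hp : p ∈ Set.Ioo (0:ℝ) 1) (hq : q ∈ Set.Ioo (0:ℝ) 1) :
    xeBin p q = klBin p q + xeBin p p := by
  rw [klBin_expand hp hq, xeBin, xeBin]
  ring

lemma mem_Ioo_combo {p r t : ℝ} (hp : p ∈ Set.Ioo (0:ℝ) 1) (hr : r ∈ Set.Ioo (0:ℝ) 1)
    (ht0 : 0 < t) (ht1 : t < 1) : (1 - t) * p + t * r ∈ Set.Ioo (0:ℝ) 1 := by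
  constructor
  · nlinarith [mul_pos (show (0:ℝ) < 1 - t by linarith) hp.1, mul_pos ht0 hr.1]
  · nlinarith [hp.2, hr.2]

lemma klBin_combo {p r q t : ℝ} (hp : p ∈ Set.Ioo (0:ℝ) 1) (hr : r ∈ Set.Ioo (0:ℝ) 1)
    (hq : q ∈ Set.Ioo (0:ℝ) 1) (ht0 : 0 < t) (ht1 : t < 1) :
    klBin ((1 - t) * p + t * r) q
      = (1 - t) * klBin p q + t * klBin r q
        - (1 - t) * klBin p ((1 - t) * p + t * r) - t * klBin r ((1 - t) * p + t * r) := by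
  have hm := mem_Ioo_combo hp hr ht0 ht1
  rw [klBin_expand hm hq, klBin_expand hp hq, klBin_expand hr hq,
    klBin_expand hp hm, klBin_expand hr hm]
  ring

lemma klBin_le_imp {p q a M : ℝ} (ha : 0 < a) (ha2 : a ≤ 1/2)
    (hp1 : a ≤ p) (hp2 : p ≤ 1 - a) (hq : q ∈ Set.Ioo (0:ℝ) 1)
    (hM : klBin p q ≤ M) :
    Real.exp ((2 * Real.log a - M) / a) ≤ q ∧
    Real.exp ((2 * Real.log a - M) / a) ≤ 1 - q := by
  obtain ⟨hq0, hq1⟩ := hq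
  have hpIoo : p ∈ Set.Ioo (0:ℝ) 1 := ⟨by linarith, by linarith⟩
  have la : Real.log a ≤ 0 := Real.log_nonpos ha.le (by linarith)
  have lq : Real.log q < 0 := Real.log_neg hq0 hq1
  have lq1 : Real.log (1 - q) < 0 := Real.log_neg (by linarith) (by linarith)
  have hlp : Real.log a ≤ Real.log p := Real.log_le_log ha hp1
  have hlp1 : Real.log a ≤ Real.log (1 - p) := Real.log_le_log ha (by linarith)
  have h1 : Real.log a ≤ p * Real.log p := by nlinarith [hpIoo.1, hpIoo.2]
  have h2 : Real.log a ≤ (1 - p) * Real.log (1 - p) := by nlinarith [hpIoo.1, hpIoo.2]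
  rw [klBin_expand hpIoo ⟨hq0, hq1⟩] at hM
  constructor
  · have key : a * (- Real.log q) ≤ M - 2 * Real.log a := by
      nlinarith [mul_nonneg (by linarith : (0:ℝ) ≤ 1 - p) (neg_nonneg.2 lq1.le),
        mul_le_mul_of_nonneg_right hp1 (neg_nonneg.2 lq.le)]
    have : (2 * Real.log a - M) / a ≤ Real.log q := by
      rw [div_le_iff₀ ha]
      nlinarith
    calc Real.exp ((2 * Real.log a - M) / a) ≤ Real.exp (Real.log q) := Real.exp_le_exp.2 this
      _ = q := Real.exp_log hq0
  · have key : a * (- Real.log (1 - q)) ≤ M - 2 * Real.log a := by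
      nlinarith [mul_nonneg hpIoo.1.le (neg_nonneg.2 lq.le),
        mul_le_mul_of_nonneg_right (by linarith : a ≤ 1 - p) (neg_nonneg.2 lq1.le)]
    have : (2 * Real.log a - M) / a ≤ Real.log (1 - q) := by
      rw [div_le_iff₀ ha]
      nlinarith
    calc Real.exp ((2 * Real.log a - M) / a) ≤ Real.exp (Real.log (1 - q)) :=
        Real.exp_le_exp.2 this
      _ = 1 - q := Real.exp_log (by linarith)

lemma klBin_diff_le {gx s t κ : ℝ} (hg : gx ∈ Set.Ioo (0:ℝ) 1) (hκ : 0 < κ)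
    (hs1 : κ ≤ s) (hs2 : s ≤ 1 - κ) (ht0 : 0 < t) (ht1 : t < 1) :
    klBin gx s - klBin gx ((1 - t) * s + t * gx) ≤ 2 * t / κ := by
  have hsIoo : s ∈ Set.Ioo (0:ℝ) 1 := ⟨by linarith, by linarith⟩
  have hm := mem_Ioo_combo hsIoo hg ht0 ht1
  set m := (1 - t) * s + t * gx with hmdef
  have hms : Real.log m - Real.log s ≤ t / κ := by
    have h := Real.log_le_sub_one_of_pos (div_pos hm.1 hsIoo.1)
    rw [Real.log_div hm.1.ne' hsIoo.1.ne'] at h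
    have e : m / s - 1 = t * (gx - s) / s := by
      rw [div_sub_one hsIoo.1.ne']
      congr 1
      rw [hmdef]; ring
    rw [e] at h
    have h1 : t * (gx - s) ≤ t := by nlinarith [hg.2, ht0.le]
    have h2 : t * (gx - s) * κ ≤ t * κ := mul_le_mul_of_nonneg_right h1 hκ.le
    have h3 : t * κ ≤ t * s := mul_le_mul_of_nonneg_left hs1 ht0.le
    have : t * (gx - s) / s ≤ t / κ := by
      rw [div_le_div_iff₀ hsIoo.1 hκ]
      linarith
    linarith
  have hms2 : Real.log (1 - m) - Real.log (1 - s) ≤ t / κ := by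
    have h := Real.log_le_sub_one_of_pos (div_pos (by linarith [hm.2] : (0:ℝ) < 1 - m)
      (by linarith [hsIoo.2] : (0:ℝ) < 1 - s))
    rw [Real.log_div (by linarith [hm.2] : (1:ℝ) - m ≠ 0)
      (by linarith [hsIoo.2] : (1:ℝ) - s ≠ 0)] at h
    have e : (1 - m) / (1 - s) - 1 = t * (s - gx) / (1 - s) := by
      rw [div_sub_one (by linarith [hsIoo.2] : (1:ℝ) - s ≠ 0)]
      congr 1
      rw [hmdef]; ring
    rw [e] at h
    have h1 : t * (s - gx) ≤ t := by nlinarith [hg.1, ht0.le]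
    have h2 : t * (s - gx) * κ ≤ t * κ := mul_le_mul_of_nonneg_right h1 hκ.le
    have h3 : t * κ ≤ t * (1 - s) := mul_le_mul_of_nonneg_left (by linarith) ht0.le
    have : t * (s - gx) / (1 - s) ≤ t / κ := by
      rw [div_le_div_iff₀ (by linarith [hsIoo.2]) hκ]
      linarith
    linarith
  rw [klBin_expand hg hsIoo, klBin_expand hg hm]
  have htκ : 0 ≤ t / κ := by positivity
  have b1 : gx * (Real.log m - Real.log s) ≤ t / κ := by
    nlinarith [hg.1, hg.2]
  have b2 : (1 - gx) * (Real.log (1 - m) - Real.log (1 - s)) ≤ t / κ := by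
    nlinarith [hg.1, hg.2]
  have : 2 * t / κ = t / κ + t / κ := by ring
  rw [this]
  nlinarith [b1, b2]


/-- **Cross-Entropy Misfit-Gain Inequality** (binary classification, convex strong class). -/
theorem xe_misfit_gain
    {ds dw : ℕ} {𝒳 : Type*} [Fintype 𝒳]
    (μ : 𝒳 → ℝ) (hμpos : ∀ x, 0 < μ x) (hμsum : ∑ x, μ x = 1)
    (hs : 𝒳 → Fin ds → ℝ) (hw : 𝒳 → Fin dw → ℝ)
    (g : 𝒳 → ℝ) (hg : ∀ x, g x ∈ Set.Ioo (0:ℝ) 1)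
    (fw : (Fin dw → ℝ) → ℝ) (hfw : ∀ v, fw v ∈ Set.Ioo (0:ℝ) 1)
    (𝓕 : Set ((Fin ds → ℝ) → ℝ))
    (h𝓕mem : ∀ f ∈ 𝓕, ∀ v, f v ∈ Set.Ioo (0:ℝ) 1)
    (h𝓕conv : Convex ℝ 𝓕)
    (hreal : ∃ fstar ∈ 𝓕, ∀ x, g x = fstar (hs x)) :
    ∀ ε > 0, ∃ δ > 0, ∀ fs ∈ 𝓕,
      (∑ x, μ x * klBin (fs (hs x)) (fw (hw x))) ≤
        (⨅ f : 𝓕, ∑ x, μ x * klBin ((f : (Fin ds → ℝ) → ℝ) (hs x)) (fw (hw x))) + δ →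
      ∑ x, μ x * xeBin (g x) (fs (hs x)) ≤
        ∑ x, μ x * xeBin (g x) (fw (hw x))
          - ∑ x, μ x * klBin (fs (hs x)) (fw (hw x)) + ε := by
  obtain ⟨fstar, hfstar, hgf⟩ := hreal
  have hXne : Nonempty 𝒳 := by
    by_contra h
    rw [not_nonempty_iff] at h
    rw [Finset.univ_eq_empty, Finset.sum_empty] at hμsum
    norm_num at hμsum
  have hune : (Finset.univ : Finset 𝒳).Nonempty := Finset.univ_nonempty
  intro ε hε
  -- constants
  set mμ := Finset.univ.inf' hune μ with hmμdef
  have hmμpos : 0 < mμ := by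
    rw [hmμdef, Finset.lt_inf'_iff]
    exact fun x _ => hμpos x
  have hmμle : ∀ x : 𝒳, mμ ≤ μ x := fun x => Finset.inf'_le _ (Finset.mem_univ x)
  set a := Finset.univ.inf' hune (fun x => min (g x) (1 - g x)) with hadef
  have hapos : 0 < a := by
    rw [hadef, Finset.lt_inf'_iff]
    exact fun x _ => lt_min (hg x).1 (by linarith [(hg x).2])
  have hale : ∀ x : 𝒳, a ≤ g x ∧ a ≤ 1 - g x := by
    intro x
    have h : a ≤ min (g x) (1 - g x) := by
      rw [hadef]; exact Finset.inf'_le _ (Finset.mem_univ x)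
    exact ⟨le_trans h (min_le_left _ _), le_trans h (min_le_right _ _)⟩
  have ha2 : a ≤ 1/2 := by
    obtain ⟨x0⟩ := hXne
    have h : a ≤ min (g x0) (1 - g x0) := by
      rw [hadef]; exact Finset.inf'_le _ (Finset.mem_univ x0)
    rcases le_total (g x0) (1 - g x0) with hc | hc
    · linarith [le_trans h (min_le_left (g x0) (1 - g x0))]
    · linarith [le_trans h (min_le_right (g x0) (1 - g x0))]
  set Lstar := ∑ x, μ x * klBin (g x) (fw (hw x)) with hLstardef
  have hLstar0 : 0 ≤ Lstar :=
    Finset.sum_nonneg fun x _ => mul_nonneg (hμpos x).le (klBin_nonneg (hg x) (hfw _))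
  set M := (1 + Lstar) / mμ with hMdef
  have hMpos : 0 < M := div_pos (by linarith) hmμpos
  set c0 := Real.exp ((2 * Real.log a - M) / a) with hc0def
  have hc0pos : 0 < c0 := Real.exp_pos _
  have hc0lt1 : c0 < 1 := by
    have hla : Real.log a < 0 := Real.log_neg hapos (by linarith)
    calc c0 < Real.exp 0 := Real.exp_lt_exp.2 (div_neg_of_neg_of_pos (by linarith) hapos)
      _ = 1 := Real.exp_zero
  set t0 := c0 / 2 with ht0def
  have ht0pos : 0 < t0 := by rw [ht0def]; linarith
  have ht0lt1 : t0 < 1 := by rw [ht0def]; linarith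
  set κ := min t0 a with hκdef
  have hκpos : 0 < κ := lt_min ht0pos hapos
  set t1 := min (ε * κ / 4) (1/2) with ht1def
  have ht1pos : 0 < t1 := lt_min (by positivity) (by norm_num)
  have ht1lt1 : t1 < 1 := lt_of_le_of_lt (min_le_right _ _) (by norm_num)
  set δval := min t0 (t1 * (ε / 2)) with hδdef
  have hδpos : 0 < δval := lt_min ht0pos (by positivity)
  have hδt0 : δval ≤ t0 := min_le_left _ _
  have hδ2 : δval ≤ t1 * (ε / 2) := min_le_right _ _
  have ht1κ : t1 ≤ ε * κ / 4 := min_le_left _ _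
  have hκt0 : κ ≤ t0 := min_le_left _ _
  have hc02 : c0 = 2 * t0 := by rw [ht0def]; ring
  clear_value mμ a Lstar M c0 t0 κ t1 δval
  refine ⟨δval, hδpos, ?_⟩
  intro fs hfs hopt
  haveI : Nonempty 𝓕 := ⟨⟨fstar, hfstar⟩⟩
  have hbdd : BddBelow (Set.range fun f : 𝓕 =>
      ∑ x, μ x * klBin ((f : (Fin ds → ℝ) → ℝ) (hs x)) (fw (hw x))) := by
    refine ⟨0, ?_⟩
    rintro y ⟨f, rfl⟩
    exact Finset.sum_nonneg fun x _ =>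
      mul_nonneg (hμpos x).le (klBin_nonneg (h𝓕mem f f.2 _) (hfw _))
  have hι_le : ∀ f, f ∈ 𝓕 →
      (⨅ f : 𝓕, ∑ x, μ x * klBin ((f : (Fin ds → ℝ) → ℝ) (hs x)) (fw (hw x)))
        ≤ ∑ x, μ x * klBin (f (hs x)) (fw (hw x)) :=
    fun f hf => ciInf_le hbdd ⟨f, hf⟩
  have hfsmem : ∀ v, fs v ∈ Set.Ioo (0:ℝ) 1 := h𝓕mem fs hfs
  have hPfs0 : 0 ≤ ∑ x, μ x * klBin (fs (hs x)) (fw (hw x)) :=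
    Finset.sum_nonneg fun x _ => mul_nonneg (hμpos x).le (klBin_nonneg (hfsmem _) (hfw _))
  -- core inequality
  have core : ∀ t, 0 < t → t < 1 →
      t * (∑ x, μ x * klBin (g x) ((1 - t) * fs (hs x) + t * g x))
        ≤ δval + t * (Lstar - ∑ x, μ x * klBin (fs (hs x)) (fw (hw x))) := by
    intro t htp htl
    set ft := (1 - t) • fs + t • fstar with hftdef
    have hftmem : ft ∈ 𝓕 := h𝓕conv hfs hfstar (by linarith) (by linarith) (by ring)
    have hftval : ∀ x, ft (hs x) = (1 - t) * fs (hs x) + t * g x := by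
      intro x
      rw [hftdef]
      simp only [Pi.add_apply, Pi.smul_apply, smul_eq_mul]
      rw [← hgf x]
    have hPft : ∑ x, μ x * klBin (ft (hs x)) (fw (hw x))
        = (1 - t) * (∑ x, μ x * klBin (fs (hs x)) (fw (hw x)))
          + t * (∑ x, μ x * klBin (g x) (fw (hw x)))
          - (1 - t) * (∑ x, μ x * klBin (fs (hs x)) ((1 - t) * fs (hs x) + t * g x))
          - t * (∑ x, μ x * klBin (g x) ((1 - t) * fs (hs x) + t * g x)) := by
      rw [Finset.mul_sum, Finset.mul_sum, Finset.mul_sum, Finset.mul_sum,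
        ← Finset.sum_add_distrib, ← Finset.sum_sub_distrib, ← Finset.sum_sub_distrib]
      refine Finset.sum_congr rfl fun x _ => ?_
      rw [hftval x, klBin_combo (hfsmem _) (hg x) (hfw _) htp htl]
      ring
    have hS : 0 ≤ ∑ x, μ x * klBin (fs (hs x)) ((1 - t) * fs (hs x) + t * g x) :=
      Finset.sum_nonneg fun x _ => mul_nonneg (hμpos x).le
        (klBin_nonneg (hfsmem _) (mem_Ioo_combo (hfsmem _) (hg x) htp htl))
    have h1 := hι_le ft hftmem
    have h2 := hopt
    have h3 : 0 ≤ (1 - t) * ∑ x, μ x * klBin (fs (hs x)) ((1 - t) * fs (hs x) + t * g x) :=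
      mul_nonneg (by linarith) hS
    rw [hPft] at h1
    rw [← hLstardef] at h1
    linarith only [h1, h2, h3]
  -- Step 1: bounds on fs values
  have hfsbd : ∀ x, t0 ≤ fs (hs x) ∧ fs (hs x) ≤ 1 - t0 := by
    intro x
    have hc := core t0 ht0pos ht0lt1
    have hKt0 : (∑ y, μ y * klBin (g y) ((1 - t0) * fs (hs y) + t0 * g y)) ≤ 1 + Lstar := by
      have hmul : t0 * (∑ y, μ y * klBin (g y) ((1 - t0) * fs (hs y) + t0 * g y))
          ≤ t0 * (1 + Lstar) := by
        linarith only [hc, hδt0, mul_nonneg ht0pos.le hPfs0]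
      exact le_of_mul_le_mul_left hmul ht0pos
    have hterm : μ x * klBin (g x) ((1 - t0) * fs (hs x) + t0 * g x)
        ≤ ∑ y, μ y * klBin (g y) ((1 - t0) * fs (hs y) + t0 * g y) :=
      Finset.single_le_sum (f := fun y => μ y * klBin (g y) ((1 - t0) * fs (hs y) + t0 * g y))
        (fun y _ => mul_nonneg (hμpos y).le
          (klBin_nonneg (hg y) (mem_Ioo_combo (hfsmem _) (hg y) ht0pos ht0lt1)))
        (Finset.mem_univ x)
    have hklnn : 0 ≤ klBin (g x) ((1 - t0) * fs (hs x) + t0 * g x) :=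
      klBin_nonneg (hg x) (mem_Ioo_combo (hfsmem _) (hg x) ht0pos ht0lt1)
    have hklM : klBin (g x) ((1 - t0) * fs (hs x) + t0 * g x) ≤ M := by
      rw [hMdef, le_div_iff₀ hmμpos]
      linarith only [mul_le_mul_of_nonneg_left (hmμle x) hklnn, le_trans hterm hKt0]
    obtain ⟨hA, hB⟩ := klBin_le_imp hapos ha2 (hale x).1 (by linarith [(hale x).2])
      (mem_Ioo_combo (hfsmem _) (hg x) ht0pos ht0lt1) hklM
    rw [← hc0def] at hA hB
    have hsx := hfsmem (hs x)
    constructor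
    · linarith only [hA, hc02, mul_le_mul_of_nonneg_left (hg x).2.le ht0pos.le,
        mul_nonneg ht0pos.le hsx.1.le]
    · linarith only [hB, hc02, mul_nonneg ht0pos.le (hg x).1.le,
        mul_le_mul_of_nonneg_left hsx.2.le ht0pos.le]
  have hκbd : ∀ x, κ ≤ fs (hs x) ∧ fs (hs x) ≤ 1 - κ := by
    intro x
    have h := hfsbd x
    exact ⟨le_trans hκt0 h.1, by linarith [h.2]⟩
  -- Step 2
  have hc1 := core t1 ht1pos ht1lt1
  have hKfs : ∑ x, μ x * klBin (g x) (fs (hs x))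
      ≤ (∑ x, μ x * klBin (g x) ((1 - t1) * fs (hs x) + t1 * g x)) + 2 * t1 / κ := by
    have hpt : ∀ x ∈ (Finset.univ : Finset 𝒳), μ x * klBin (g x) (fs (hs x))
        ≤ μ x * (klBin (g x) ((1 - t1) * fs (hs x) + t1 * g x) + 2 * t1 / κ) := by
      intro x _
      have hd := klBin_diff_le (hg x) hκpos (hκbd x).1 (hκbd x).2 ht1pos ht1lt1
      exact mul_le_mul_of_nonneg_left (by linarith) (hμpos x).le
    calc ∑ x, μ x * klBin (g x) (fs (hs x))
        ≤ ∑ x, μ x * (klBin (g x) ((1 - t1) * fs (hs x) + t1 * g x) + 2 * t1 / κ) :=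
          Finset.sum_le_sum hpt
      _ = (∑ x, μ x * klBin (g x) ((1 - t1) * fs (hs x) + t1 * g x))
            + (∑ x, μ x) * (2 * t1 / κ) := by
          rw [Finset.sum_mul, ← Finset.sum_add_distrib]
          exact Finset.sum_congr rfl fun x _ => by ring
      _ = (∑ x, μ x * klBin (g x) ((1 - t1) * fs (hs x) + t1 * g x)) + 2 * t1 / κ := by
          rw [hμsum, one_mul]
  have h2t : 2 * t1 / κ ≤ ε / 2 := by
    rw [div_le_iff₀ hκpos]
    linarith only [ht1κ]
  have hδt1 : δval / t1 ≤ ε / 2 := by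
    rw [div_le_iff₀ ht1pos]
    linarith only [hδ2]
  have hKt1 : (∑ x, μ x * klBin (g x) ((1 - t1) * fs (hs x) + t1 * g x))
      ≤ δval / t1 + Lstar - ∑ x, μ x * klBin (fs (hs x)) (fw (hw x)) := by
    have e : t1 * (δval / t1 + Lstar - ∑ x, μ x * klBin (fs (hs x)) (fw (hw x)))
        = δval + t1 * (Lstar - ∑ x, μ x * klBin (fs (hs x)) (fw (hw x))) := by
      field_simp
      ring
    refine le_of_mul_le_mul_left ?_ ht1pos
    rw [e]
    linarith only [hc1]
  have final : (∑ x, μ x * klBin (g x) (fs (hs x)))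
      + (∑ x, μ x * klBin (fs (hs x)) (fw (hw x))) ≤ Lstar + ε := by
    linarith only [hKfs, hKt1, h2t, hδt1]
  -- convert goal
  have hxe1 : ∑ x, μ x * xeBin (g x) (fs (hs x))
      = (∑ x, μ x * klBin (g x) (fs (hs x))) + ∑ x, μ x * xeBin (g x) (g x) := by
    rw [← Finset.sum_add_distrib]
    exact Finset.sum_congr rfl fun x _ => by rw [xeBin_eq (hg x) (hfsmem _)]; ring
  have hxe2 : ∑ x, μ x * xeBin (g x) (fw (hw x))
      = Lstar + ∑ x, μ x * xeBin (g x) (g x) := by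
    rw [hLstardef, ← Finset.sum_add_distrib]
    exact Finset.sum_congr rfl fun x _ => by rw [xeBin_eq (hg x) (hfw _)]; ring
  rw [hxe1, hxe2]
  linarith only [final]
end

section
/- Let X be a random variable with finite support 𝒳 in which every point has positive probability, let h_s: 𝒳 → ℝ^{d_s} and h_w: 𝒳 → ℝ^{d_w} be maps, let g: 𝒳 → Δ^{c−1}, let f_w: ℝ^{d_w} → Δ^{c−1}, and let 𝓕 be a convex set of functions ℝ^{d_s} → Δ^{c−1} such that g = f_* ∘ h_s for some f_* ∈ 𝓕. Then for every ε > 0 there exists δ > 0 such that every f_s ∈ 𝓕 satisfying E[D_KL(f_s(h_s(X)) ‖ f_w(h_w(X)))] ≤ inf_{f ∈ 𝓕} E[D_KL(f(h_s(X)) ‖ f_w(h_w(X)))] + δ also satisfies E[XE(g(X) ‖ f_s(h_s(X)))] ≤ E[XE(g(X) ‖ f_w(h_w(X)))] − E[D_KL(f_s(h_s(X)) ‖ f_w(h_w(X)))] + ε. -/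
open Real

/-- The open probability simplex `Δ^{c−1} = {p ∈ (0,1)^c : Σ p_i = 1}`. -/
def openSimplex (c : ℕ) : Set (Fin c → ℝ) :=
  {p | (∀ i, p i ∈ Set.Ioo (0:ℝ) 1) ∧ ∑ i, p i = 1}

/-- Multi-class KL divergence `D_KL(p ‖ q) = Σ_i p_i log(p_i/q_i)`. -/
noncomputable def klVec {c : ℕ} (p q : Fin c → ℝ) : ℝ :=
  ∑ i, p i * Real.log (p i / q i)

/-- Multi-class cross-entropy `XE(p ‖ q) = −Σ_i p_i log q_i`. -/
noncomputable def xeVec {c : ℕ} (p q : Fin c → ℝ) : ℝ :=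
  -∑ i, p i * Real.log (q i)

lemma klVec_nonneg' {c : ℕ} {p q : Fin c → ℝ} (hp : ∀ i, 0 < p i) (hq : ∀ i, 0 < q i)
    (h : ∑ i, q i ≤ ∑ i, p i) : 0 ≤ klVec p q := by
  have key : ∀ i ∈ Finset.univ, p i - q i ≤ p i * Real.log (p i / q i) := by
    intro i _
    have h1 : Real.log (q i / p i) ≤ q i / p i - 1 :=
      Real.log_le_sub_one_of_pos (div_pos (hq i) (hp i))
    have h2 : Real.log (q i / p i) = - Real.log (p i / q i) := by
      rw [← Real.log_inv]; congr 1; rw [inv_div]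
    have hpi := hp i; have hqi := hq i
    have h3 := mul_le_mul_of_nonneg_left h1 hpi.le
    rw [h2] at h3
    have hqp : p i * (q i / p i - 1) = q i - p i := by field_simp
    nlinarith
  have h4 := Finset.sum_le_sum key
  rw [Finset.sum_sub_distrib] at h4
  unfold klVec
  linarith

lemma expand_klVec {c : ℕ} (u v : Fin c → ℝ) (hu : ∀ i, 0 < u i) (hv : ∀ i, 0 < v i) :
    klVec u v = (∑ i, u i * Real.log (u i)) - ∑ i, u i * Real.log (v i) := by
  unfold klVec
  rw [← Finset.sum_sub_distrib]
  apply Finset.sum_congr rfl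
  intro i _
  rw [Real.log_div (hu i).ne' (hv i).ne']; ring

lemma key_step {c : ℕ} {t : ℝ} (ht0 : 0 < t) (ht1 : t < 1) {p q G : Fin c → ℝ}
    (hp : ∀ i, 0 < p i) (hq : ∀ i, 0 < q i) (hG : ∀ i, 0 < G i)
    (hps : ∑ i, p i = 1) (hGs : ∑ i, G i = 1) :
    klVec (fun i => (1-t) * p i + t * G i) q - klVec p q ≤
      t * (klVec G q - klVec p q - klVec G (fun i => (1-t) * p i + t * G i)) := by
  set pt : Fin c → ℝ := fun i => (1-t) * p i + t * G i with hptdef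
  have hptpos : ∀ i, 0 < pt i := fun i => by
    have := hp i; have := hG i; simp only [hptdef]; nlinarith
  have hpts : ∑ i, pt i = 1 := by
    simp only [hptdef]
    rw [Finset.sum_add_distrib, ← Finset.mul_sum, ← Finset.mul_sum, hps, hGs]; ring
  have hkl : 0 ≤ klVec p pt := klVec_nonneg' hp hptpos (by rw [hps, hpts])
  have hA : ∑ i, pt i * Real.log (q i) =
      (1-t) * ∑ i, p i * Real.log (q i) + t * ∑ i, G i * Real.log (q i) := by
    rw [Finset.mul_sum, Finset.mul_sum, ← Finset.sum_add_distrib]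
    apply Finset.sum_congr rfl; intro i _; simp only [hptdef]; ring
  have hB : ∑ i, pt i * Real.log (pt i) =
      (1-t) * ∑ i, p i * Real.log (pt i) + t * ∑ i, G i * Real.log (pt i) := by
    rw [Finset.mul_sum, Finset.mul_sum, ← Finset.sum_add_distrib]
    apply Finset.sum_congr rfl; intro i _; simp only [hptdef]; ring
  have hid : klVec pt q - klVec p q - t * (klVec G q - klVec p q - klVec G pt)
      = -((1-t) * klVec p pt) := by
    rw [expand_klVec pt q hptpos hq, expand_klVec p q hp hq, expand_klVec G q hG hq,
      expand_klVec G pt hG hptpos, expand_klVec p pt hp hptpos]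
    linear_combination hB - hA
  have hnn : 0 ≤ (1-t) * klVec p pt := mul_nonneg (by linarith) hkl
  linarith

lemma log_ge_one_sub_inv {x : ℝ} (hx : 0 < x) : 1 - 1/x ≤ Real.log x := by
  have h := Real.log_le_sub_one_of_pos (show (0:ℝ) < 1/x by positivity)
  rw [one_div, Real.log_inv] at h
  have : (x:ℝ)⁻¹ = 1/x := (one_div x).symm
  linarith [h, this ▸ h]

lemma extract_lb {c : ℕ} {𝒳 : Type*} [Fintype 𝒳] (μ : 𝒳 → ℝ) (hμpos : ∀ x, 0 < μ x)
    (hμsum : ∑ x, μ x = 1)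
    (G pt : 𝒳 → Fin c → ℝ) (hG0 : ∀ x i, 0 < G x i) (hG1 : ∀ x i, G x i ≤ 1)
    (hpt0 : ∀ x i, 0 < pt x i) (hpt1 : ∀ x i, pt x i ≤ 1)
    (gm μm M : ℝ) (hgm0 : 0 ≤ gm) (hgm : ∀ x i, gm ≤ G x i) (hμm : ∀ x, μm ≤ μ x)
    (hT : ∑ x, μ x * klVec (G x) (pt x) ≤ M) :
    ∀ x i, μm * (gm * Real.log (1 / pt x i)) ≤ M + 2*c + 1 := by
  intro x0 i0
  have hlogG : ∀ x i, 1 - 1/(G x i) ≤ Real.log (G x i) := fun x i => log_ge_one_sub_inv (hG0 x i)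
  have hlograt : ∀ x i, Real.log (G x i) ≤ Real.log (G x i / pt x i) := by
    intro x i
    apply Real.log_le_log (hG0 x i)
    rw [le_div_iff₀ (hpt0 x i)]
    nlinarith [hG0 x i, hpt1 x i]
  have ha : ∀ x i, -1 ≤ G x i * Real.log (G x i / pt x i) := by
    intro x i
    have h1 := hlogG x i; have h2 := hlograt x i
    have h3 : G x i * (1 - 1/(G x i)) = G x i - 1 := by
      rw [mul_sub, mul_one, mul_one_div, div_self (hG0 x i).ne']
    nlinarith [hG0 x i, hG1 x i]
  have hklb : ∀ x, -(c:ℝ) ≤ klVec (G x) (pt x) := by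
    intro x
    have h := Finset.sum_le_sum (fun i (_ : i ∈ Finset.univ) => ha x i)
    simp only [Finset.sum_const, Finset.card_univ, Fintype.card_fin, nsmul_eq_mul,
      mul_neg, mul_one] at h
    unfold klVec
    linarith
  have hμle1 : ∀ x, μ x ≤ 1 := by
    intro x
    have := Finset.single_le_sum (fun y (_ : y ∈ Finset.univ) => (hμpos y).le) (Finset.mem_univ x)
    linarith [hμsum ▸ this]
  have hone : ∀ x, μ x * klVec (G x) (pt x) ≤ M + c := by
    intro x
    have hnn : ∀ y ∈ Finset.univ, (0:ℝ) ≤ μ y * klVec (G y) (pt y) + μ y * c := by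
      intro y _
      nlinarith [hklb y, hμpos y]
    have h := Finset.single_le_sum hnn (Finset.mem_univ x)
    rw [Finset.sum_add_distrib] at h
    have h2 : ∑ y, μ y * (c:ℝ) = c := by rw [← Finset.sum_mul, hμsum, one_mul]
    nlinarith [hμpos x, hT, h2 ▸ h]
  have hinner : G x0 i0 * Real.log (G x0 i0 / pt x0 i0) ≤ klVec (G x0) (pt x0) + c := by
    have hnn : ∀ i ∈ Finset.univ, (0:ℝ) ≤ G x0 i * Real.log (G x0 i / pt x0 i) + 1 := by
      intro i _; linarith [ha x0 i]
    have h := Finset.single_le_sum hnn (Finset.mem_univ i0)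
    rw [Finset.sum_add_distrib] at h
    simp only [Finset.sum_const, Finset.card_univ, Fintype.card_fin, nsmul_eq_mul,
      mul_one] at h
    unfold klVec at *
    linarith
  have htwo : μ x0 * (G x0 i0 * Real.log (G x0 i0 / pt x0 i0)) ≤ M + 2*c := by
    have h := mul_le_mul_of_nonneg_left hinner (hμpos x0).le
    have h2 := hone x0
    nlinarith [hμpos x0, hμle1 x0, Nat.cast_nonneg (α := ℝ) c]
  have hlog1pt : 0 ≤ Real.log (1 / pt x0 i0) := by
    apply Real.log_nonneg
    rw [le_div_iff₀ (hpt0 x0 i0)]; linarith [hpt1 x0 i0]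
  have hsplit : Real.log (G x0 i0 / pt x0 i0) = Real.log (G x0 i0) + Real.log (1 / pt x0 i0) := by
    rw [Real.log_div (hG0 x0 i0).ne' (hpt0 x0 i0).ne', Real.log_div one_ne_zero (hpt0 x0 i0).ne',
      Real.log_one]
    ring
  have hGlogG : -1 ≤ G x0 i0 * Real.log (G x0 i0) := by
    have h1 := hlogG x0 i0
    have h3 : G x0 i0 * (1 - 1/(G x0 i0)) = G x0 i0 - 1 := by
      rw [mul_sub, mul_one, mul_one_div, div_self (hG0 x0 i0).ne']
    nlinarith [hG0 x0 i0, hG1 x0 i0]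
  have hmono : gm * Real.log (1 / pt x0 i0) ≤ G x0 i0 * Real.log (1 / pt x0 i0) :=
    mul_le_mul_of_nonneg_right (hgm x0 i0) hlog1pt
  have hkey : gm * Real.log (1 / pt x0 i0) ≤ 1 + G x0 i0 * Real.log (G x0 i0 / pt x0 i0) := by
    rw [hsplit, mul_add]
    linarith
  have hnn2 : 0 ≤ gm * Real.log (1/pt x0 i0) := mul_nonneg hgm0 hlog1pt
  have hstep1 : μm * (gm * Real.log (1/pt x0 i0)) ≤ μ x0 * (gm * Real.log (1/pt x0 i0)) :=
    mul_le_mul_of_nonneg_right (hμm x0) hnn2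
  have hstep2 : μ x0 * (gm * Real.log (1/pt x0 i0)) ≤
      μ x0 * (1 + G x0 i0 * Real.log (G x0 i0 / pt x0 i0)) :=
    mul_le_mul_of_nonneg_left hkey (hμpos x0).le
  have hstep3 : μ x0 * (1 + G x0 i0 * Real.log (G x0 i0 / pt x0 i0)) =
      μ x0 + μ x0 * (G x0 i0 * Real.log (G x0 i0 / pt x0 i0)) := by ring
  linarith [hμle1 x0, htwo]

/-- **Multi-Class Misfit-Gain Inequality** (convex strong class). -/
theorem multiclass_misfit_gain
    {c ds dw : ℕ} {𝒳 : Type*} [Fintype 𝒳]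
    (μ : 𝒳 → ℝ) (hμpos : ∀ x, 0 < μ x) (hμsum : ∑ x, μ x = 1)
    (hs : 𝒳 → Fin ds → ℝ) (hw : 𝒳 → Fin dw → ℝ)
    (g : 𝒳 → Fin c → ℝ) (hg : ∀ x, g x ∈ openSimplex c)
    (fw : (Fin dw → ℝ) → Fin c → ℝ) (hfw : ∀ v, fw v ∈ openSimplex c)
    (𝓕 : Set ((Fin ds → ℝ) → Fin c → ℝ))
    (h𝓕mem : ∀ f ∈ 𝓕, ∀ v, f v ∈ openSimplex c)
    (h𝓕conv : Convex ℝ 𝓕)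
    (hreal : ∃ fstar ∈ 𝓕, ∀ x, g x = fstar (hs x)) :
    ∀ ε > 0, ∃ δ > 0, ∀ fs ∈ 𝓕,
      (∑ x, μ x * klVec (fs (hs x)) (fw (hw x))) ≤
        (⨅ f : 𝓕, ∑ x, μ x * klVec ((f : (Fin ds → ℝ) → Fin c → ℝ) (hs x)) (fw (hw x))) + δ →
      ∑ x, μ x * xeVec (g x) (fs (hs x)) ≤
        ∑ x, μ x * xeVec (g x) (fw (hw x))
          - ∑ x, μ x * klVec (fs (hs x)) (fw (hw x)) + ε := by
  classical
  obtain ⟨fstar, hfstar𝓕, hfstarg⟩ := hreal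
  have hX : Nonempty 𝒳 := by
    by_contra h
    rw [not_nonempty_iff] at h
    rw [Finset.univ_eq_empty, Finset.sum_empty] at hμsum
    exact one_ne_zero hμsum.symm
  obtain ⟨x00⟩ := hX
  have hg0 : ∀ x i, 0 < g x i := fun x i => ((hg x).1 i).1
  have hg1 : ∀ x i, g x i < 1 := fun x i => ((hg x).1 i).2
  have hgs : ∀ x, ∑ i, g x i = 1 := fun x => (hg x).2
  have hq0 : ∀ x i, 0 < fw (hw x) i := fun x i => ((hfw (hw x)).1 i).1
  have hqs : ∀ x, ∑ i, fw (hw x) i = 1 := fun x => (hfw (hw x)).2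
  haveI hXne : Nonempty 𝒳 := ⟨x00⟩
  have hcpos : 0 < c := by
    rcases Nat.eq_zero_or_pos c with h | h
    · exfalso; have := hgs x00; subst h; simp at this
    · exact h
  haveI : Nonempty (Fin c) := ⟨⟨0, hcpos⟩⟩
  obtain ⟨⟨xg, ig⟩, hgmmin⟩ := Finite.exists_min (fun pr : 𝒳 × Fin c => g pr.1 pr.2)
  obtain ⟨xμ, hμmmin⟩ := Finite.exists_min μ
  have hgm0 : 0 < g xg ig := hg0 xg ig
  have hμm0 : 0 < μ xμ := hμpos xμ
  have hgmle : ∀ x i, g xg ig ≤ g x i := fun x i => hgmmin (x, i)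
  have hC0nn : 0 ≤ ∑ x, μ x * klVec (g x) (fw (hw x)) :=
    Finset.sum_nonneg fun x _ => mul_nonneg (hμpos x).le
      (klVec_nonneg' (hg0 x) (hq0 x) (by rw [hgs x, hqs x]))
  obtain ⟨K, hKdef⟩ : ∃ y, y = ((∑ x, μ x * klVec (g x) (fw (hw x))) + 2*(c:ℝ) + 2) / (μ xμ * g xg ig) := ⟨_, rfl⟩
  obtain ⟨r, hrdef⟩ : ∃ y, y = Real.exp (-K) := ⟨_, rfl⟩
  have hr0 : 0 < r := by rw [hrdef]; exact Real.exp_pos _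
  have hrK : r * Real.exp K = 1 := by rw [hrdef, ← Real.exp_add]; simp
  intro ε hε
  have ht0' : 0 < min (r/2) (ε*r/4) := lt_min (by positivity) (by positivity)
  obtain ⟨t, htdef⟩ : ∃ y, y = min (1/2 : ℝ) (min (r/2) (ε*r/4)) := ⟨_, rfl⟩
  have ht0 : 0 < t := by rw [htdef]; exact lt_min (by norm_num) ht0'
  have ht1 : t < 1 := by rw [htdef]; exact lt_of_le_of_lt (min_le_left _ _) (by norm_num)
  have htr2 : t ≤ r/2 := by rw [htdef]; exact le_trans (min_le_right _ _) (min_le_left _ _)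
  have hter : t ≤ ε*r/4 := by rw [htdef]; exact le_trans (min_le_right _ _) (min_le_right _ _)
  obtain ⟨m, hmdef⟩ : ∃ y, y = min (1:ℝ) (ε/2) := ⟨_, rfl⟩
  have hm0 : 0 < m := by rw [hmdef]; exact lt_min one_pos (by positivity)
  have hm1 : m ≤ 1 := by rw [hmdef]; exact min_le_left _ _
  have hm2 : m ≤ ε/2 := by rw [hmdef]; exact min_le_right _ _
  refine ⟨t * m, mul_pos ht0 hm0, ?_⟩
  intro fs hfs𝓕 hopt
  have hp0 : ∀ x i, 0 < fs (hs x) i := fun x i => ((h𝓕mem fs hfs𝓕 (hs x)).1 i).1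
  have hp1 : ∀ x i, fs (hs x) i < 1 := fun x i => ((h𝓕mem fs hfs𝓕 (hs x)).1 i).2
  have hps : ∀ x, ∑ i, fs (hs x) i = 1 := fun x => (h𝓕mem fs hfs𝓕 (hs x)).2
  have hpt0 : ∀ x i, 0 < (1-t) * fs (hs x) i + t * g x i := by
    intro x i; nlinarith [hp0 x i, hg0 x i, ht0, ht1]
  have hpt1 : ∀ x i, (1-t) * fs (hs x) i + t * g x i ≤ 1 := by
    intro x i; nlinarith [hp1 x i, hg1 x i, ht0, ht1]
  -- Step 1: summed key inequality
  have hsumstep : (∑ x, μ x * klVec (fun i => (1-t) * fs (hs x) i + t * g x i) (fw (hw x)))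
      - (∑ x, μ x * klVec (fs (hs x)) (fw (hw x)))
      ≤ t * (∑ x, μ x * klVec (g x) (fw (hw x)))
        - t * (∑ x, μ x * klVec (fs (hs x)) (fw (hw x)))
        - t * (∑ x, μ x * klVec (g x) (fun i => (1-t) * fs (hs x) i + t * g x i)) := by
    have h1 : ∀ x ∈ Finset.univ,
        μ x * klVec (fun i => (1-t) * fs (hs x) i + t * g x i) (fw (hw x))
          - μ x * klVec (fs (hs x)) (fw (hw x))
        ≤ t * (μ x * klVec (g x) (fw (hw x))) - t * (μ x * klVec (fs (hs x)) (fw (hw x)))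
          - t * (μ x * klVec (g x) (fun i => (1-t) * fs (hs x) i + t * g x i)) := by
      intro x _
      have hk := key_step ht0 ht1 (hp0 x) (hq0 x) (hg0 x) (hps x) (hgs x)
      have hmul := mul_le_mul_of_nonneg_left hk (hμpos x).le
      nlinarith [hmul]
    have h2 := Finset.sum_le_sum h1
    simp only [Finset.sum_sub_distrib, ← Finset.mul_sum] at h2
    linarith
  -- Step 2: near-optimality
  have hft : ((1:ℝ)-t) • fs + t • fstar ∈ 𝓕 :=
    h𝓕conv hfs𝓕 hfstar𝓕 (by linarith) ht0.le (by ring)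
  have hbdd : BddBelow (Set.range fun f : 𝓕 =>
      ∑ x, μ x * klVec ((f : (Fin ds → ℝ) → Fin c → ℝ) (hs x)) (fw (hw x))) := by
    refine ⟨0, ?_⟩
    rintro y ⟨f, rfl⟩
    exact Finset.sum_nonneg fun x _ => mul_nonneg (hμpos x).le
      (klVec_nonneg' (fun i => ((h𝓕mem _ f.2 (hs x)).1 i).1) (hq0 x)
        (by rw [(h𝓕mem _ f.2 (hs x)).2, hqs x]))
  have hinfle := ciInf_le hbdd (⟨((1:ℝ)-t) • fs + t • fstar, hft⟩ : 𝓕)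
  have hfteq : ∀ x, ((((1:ℝ)-t) • fs + t • fstar) (hs x)) =
      fun i => (1-t) * fs (hs x) i + t * g x i := by
    intro x; funext i
    simp only [Pi.add_apply, Pi.smul_apply, smul_eq_mul]
    rw [hfstarg x]
  have hinfle' : (⨅ f : 𝓕, ∑ x, μ x * klVec ((f : (Fin ds → ℝ) → Fin c → ℝ) (hs x)) (fw (hw x)))
      ≤ ∑ x, μ x * klVec (fun i => (1-t) * fs (hs x) i + t * g x i) (fw (hw x)) := by
    have hinfle2 : (⨅ f : 𝓕, ∑ x, μ x * klVec ((f : (Fin ds → ℝ) → Fin c → ℝ) (hs x)) (fw (hw x)))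
        ≤ ∑ x, μ x * klVec ((((1:ℝ)-t) • fs + t • fstar) (hs x)) (fw (hw x)) := hinfle
    refine le_trans hinfle2 (le_of_eq ?_)
    exact Finset.sum_congr rfl fun x _ => by rw [hfteq x]
  have hnearopt : (∑ x, μ x * klVec (fs (hs x)) (fw (hw x))) ≤
      (∑ x, μ x * klVec (fun i => (1-t) * fs (hs x) i + t * g x i) (fw (hw x))) + t * m :=
    le_trans hopt (by linarith)
  have hLnn : 0 ≤ ∑ x, μ x * klVec (fs (hs x)) (fw (hw x)) :=
    Finset.sum_nonneg fun x _ => mul_nonneg (hμpos x).le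
      (klVec_nonneg' (hp0 x) (hq0 x) (by rw [hps x, hqs x]))
  -- Step 3: bound on T
  have hTbound : (∑ x, μ x * klVec (g x) (fun i => (1-t) * fs (hs x) i + t * g x i))
      ≤ (∑ x, μ x * klVec (g x) (fw (hw x)))
        - (∑ x, μ x * klVec (fs (hs x)) (fw (hw x))) + m := by
    have h3 : t * (-m) ≤ t * ((∑ x, μ x * klVec (g x) (fw (hw x)))
        - (∑ x, μ x * klVec (fs (hs x)) (fw (hw x)))
        - (∑ x, μ x * klVec (g x) (fun i => (1-t) * fs (hs x) i + t * g x i))) := by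
      nlinarith [hsumstep, hnearopt]
    have h4 := (mul_le_mul_iff_right₀ ht0).mp h3
    linarith
  have hTbound2 : (∑ x, μ x * klVec (g x) (fun i => (1-t) * fs (hs x) i + t * g x i))
      ≤ (∑ x, μ x * klVec (g x) (fw (hw x))) + 1 := by
    linarith [hLnn, hm1]
  -- Step 4: extraction of componentwise lower bound on pt
  have hext : ∀ x i, μ xμ * (g xg ig * Real.log (1 / ((1-t) * fs (hs x) i + t * g x i))) ≤
      ((∑ x, μ x * klVec (g x) (fw (hw x))) + 1) + 2*c + 1 :=
    extract_lb μ hμpos hμsum g (fun x i => (1-t) * fs (hs x) i + t * g x i)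
      hg0 (fun x i => (hg1 x i).le) hpt0 hpt1 (g xg ig) (μ xμ) _ hgm0.le hgmle hμmmin hTbound2
  have hptlb : ∀ x i, r ≤ (1-t) * fs (hs x) i + t * g x i := by
    intro x i
    have h1 := hext x i
    have hKb : Real.log (1 / ((1-t) * fs (hs x) i + t * g x i)) ≤ K := by
      rw [hKdef, le_div_iff₀ (by positivity : (0:ℝ) < μ xμ * g xg ig)]
      linarith only [h1]
    have h5 : 1 / ((1-t) * fs (hs x) i + t * g x i) ≤ Real.exp K :=
      (Real.log_le_iff_le_exp (one_div_pos.mpr (hpt0 x i))).mp hKb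
    have h6 : 1 ≤ Real.exp K * ((1-t) * fs (hs x) i + t * g x i) :=
      (div_le_iff₀ (hpt0 x i)).mp h5
    have h7 : r * (Real.exp K * ((1-t) * fs (hs x) i + t * g x i))
        = (1-t) * fs (hs x) i + t * g x i := by
      rw [← mul_assoc, hrK, one_mul]
    have h8 := mul_le_mul_of_nonneg_left h6 hr0.le
    linarith [h7 ▸ h8]
  -- Step 5: lower bound on fs
  have hplb : ∀ x i, r/2 ≤ fs (hs x) i := by
    intro x i
    have h1 := hptlb x i
    have h2 : t * g x i ≤ t * 1 := mul_le_mul_of_nonneg_left (hg1 x i).le ht0.le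
    have h3 : 0 ≤ t * fs (hs x) i := mul_nonneg ht0.le (hp0 x i).le
    linarith only [h1, h2, h3, htr2]
  -- Step 6: the gap klVec g p - klVec g pt is small
  have hdiff : ∀ x, klVec (g x) (fs (hs x))
      - klVec (g x) (fun i => (1-t) * fs (hs x) i + t * g x i) ≤ 2*t/r := by
    intro x
    have hterm : ∀ i ∈ Finset.univ,
        g x i * Real.log (g x i / fs (hs x) i)
          - g x i * Real.log (g x i / ((1-t) * fs (hs x) i + t * g x i)) ≤ g x i * (2*t/r) := by
      intro i _
      have hptpos := hpt0 x i
      have hppos := hp0 x i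
      have he : (2*t/r) * (r/2) = t := by field_simp
      have hA : (2*t/r) * (r/2) ≤ (2*t/r) * fs (hs x) i :=
        mul_le_mul_of_nonneg_left (hplb x i) (by positivity)
      have htg : t * g x i ≤ t * 1 := mul_le_mul_of_nonneg_left (hg1 x i).le ht0.le
      have htp : 0 ≤ t * fs (hs x) i := mul_nonneg ht0.le hppos.le
      have h2 : (1-t) * fs (hs x) i + t * g x i ≤ (1 + 2*t/r) * fs (hs x) i := by
        linarith only [hA, htg, htp, he]
      have h3 : ((1-t) * fs (hs x) i + t * g x i) / fs (hs x) i ≤ 1 + 2*t/r :=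
        (div_le_iff₀ hppos).mpr h2
      have h1 : Real.log (((1-t) * fs (hs x) i + t * g x i) / fs (hs x) i)
          ≤ ((1-t) * fs (hs x) i + t * g x i) / fs (hs x) i - 1 :=
        Real.log_le_sub_one_of_pos (by positivity)
      rw [Real.log_div hptpos.ne' hppos.ne'] at h1
      have h4 : Real.log ((1-t) * fs (hs x) i + t * g x i) - Real.log (fs (hs x) i)
          ≤ 2*t/r := by linarith
      have h5 : g x i * Real.log (g x i / fs (hs x) i)
          - g x i * Real.log (g x i / ((1-t) * fs (hs x) i + t * g x i))
          = g x i * (Real.log ((1-t) * fs (hs x) i + t * g x i) - Real.log (fs (hs x) i)) := by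
        rw [Real.log_div (hg0 x i).ne' hppos.ne', Real.log_div (hg0 x i).ne' hptpos.ne']
        ring
      rw [h5]
      exact mul_le_mul_of_nonneg_left h4 (hg0 x i).le
    have hsum := Finset.sum_le_sum hterm
    have hlhs : klVec (g x) (fs (hs x))
        - klVec (g x) (fun i => (1-t) * fs (hs x) i + t * g x i)
        = ∑ i, (g x i * Real.log (g x i / fs (hs x) i)
          - g x i * Real.log (g x i / ((1-t) * fs (hs x) i + t * g x i))) := by
      unfold klVec
      rw [Finset.sum_sub_distrib]
    have hrhs : ∑ i, g x i * (2*t/r) = 2*t/r := by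
      rw [← Finset.sum_mul, hgs x, one_mul]
    rw [hlhs]
    linarith [hrhs ▸ hsum]
  have hsumdiff : (∑ x, μ x * klVec (g x) (fs (hs x)))
      - (∑ x, μ x * klVec (g x) (fun i => (1-t) * fs (hs x) i + t * g x i)) ≤ 2*t/r := by
    have h1 : ∀ x ∈ Finset.univ,
        μ x * klVec (g x) (fs (hs x))
          - μ x * klVec (g x) (fun i => (1-t) * fs (hs x) i + t * g x i) ≤ μ x * (2*t/r) := by
      intro x _
      have h := hdiff x
      linarith only [mul_le_mul_of_nonneg_left h (hμpos x).le]
    have h2 := Finset.sum_le_sum h1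
    rw [Finset.sum_sub_distrib] at h2
    have h3 : ∑ x, μ x * (2*t/r) = 2*t/r := by rw [← Finset.sum_mul, hμsum, one_mul]
    linarith [h3 ▸ h2]
  have h2tr : 2*t/r ≤ ε/2 := by
    rw [div_le_iff₀ hr0]
    linarith only [hter]
  have hfinal : (∑ x, μ x * klVec (g x) (fs (hs x)))
      ≤ (∑ x, μ x * klVec (g x) (fw (hw x)))
        - (∑ x, μ x * klVec (fs (hs x)) (fw (hw x))) + ε := by
    linarith [hTbound, hsumdiff, hm2, h2tr]
  -- Step 7: convert cross-entropy to KL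
  have hxe : ∀ (x : 𝒳) (v : Fin c → ℝ), (∀ i, 0 < v i) →
      xeVec (g x) v = klVec (g x) v - ∑ i, g x i * Real.log (g x i) := by
    intro x v hv
    rw [expand_klVec (g x) v (hg0 x) hv]
    unfold xeVec
    ring
  have e1 : ∑ x, μ x * xeVec (g x) (fs (hs x)) = (∑ x, μ x * klVec (g x) (fs (hs x)))
      - ∑ x, μ x * (∑ i, g x i * Real.log (g x i)) := by
    rw [← Finset.sum_sub_distrib]
    exact Finset.sum_congr rfl fun x _ => by rw [hxe x _ (hp0 x)]; ring
  have e2 : ∑ x, μ x * xeVec (g x) (fw (hw x)) = (∑ x, μ x * klVec (g x) (fw (hw x)))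
      - ∑ x, μ x * (∑ i, g x i * Real.log (g x i)) := by
    rw [← Finset.sum_sub_distrib]
    exact Finset.sum_congr rfl fun x _ => by rw [hxe x _ (hq0 x)]; ring
  rw [e1, e2]
  linarith [hfinal]
end

section
/- Let c ≥ 2 and let S ⊂ ▵^{c−1} be a set such that a_i := sup_{p ∈ S} 1/p_i is finite for every i ∈ {1,…,c}, where p_c := 1 − Σ_{i=1}^{c−1} p_i. Let ψ: ▵^{c−1} → ℝ be the negative Shannon entropy ψ(p) := Σ_{i=1}^{c−1} p_i log p_i + (1 − Σ_{i=1}^{c−1} p_i)·log(1 − Σ_{i=1}^{c−1} p_i), restricted to the convex hull of S. Then for every k ∈ ℕ, Gap(k; ψ|_{co S}) ≤ (1/(8k))·Σ_{i=1}^c a_i·(1 − Σ_{j=1}^c 1/a_j)² ≤ (1/(8k))·Σ_{i=1}^c a_i. -/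
open Real

/-- The reduced open simplex `▵^{c−1} = {p ∈ (0,1)^{c−1} : Σ p_i < 1}`. -/
def redSimplex (c : ℕ) : Set (Fin (c - 1) → ℝ) :=
  {p | (∀ i, p i ∈ Set.Ioo (0:ℝ) 1) ∧ ∑ i, p i < 1}

/-- Extension of `p ∈ ▵^{c−1}` to a probability vector on `c` classes via the residual
coordinate `p_c := 1 − Σ_{i<c−1} p_i`. -/
noncomputable def extendProb (c : ℕ) (p : Fin (c - 1) → ℝ) : Fin c → ℝ :=
  fun i => if h : (i : ℕ) < c - 1 then p ⟨i, h⟩ else 1 - ∑ j, p j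

/-- Negative Shannon entropy on `▵^{c−1}`:
`ψ(p) = Σ_{i<c−1} p_i log p_i + (1 − Σ p_i) log (1 − Σ p_i)`. -/
noncomputable def negEnt (c : ℕ) (p : Fin (c - 1) → ℝ) : ℝ :=
  ∑ i, p i * Real.log (p i) + (1 - ∑ i, p i) * Real.log (1 - ∑ i, p i)

/-- The Jensen approximation gap `Gap(n; φ)` of a function `φ` with domain `D`. -/
noncomputable def jensenGap {V : Type*} [AddCommGroup V] [Module ℝ V]
    (n : ℕ) (D : Set V) (φ : V → ℝ) : ℝ :=
  sSup {gap : ℝ | ∃ (m : ℕ) (w : Fin m → ℝ) (z : Fin m → V),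
    (∀ i, 0 ≤ w i) ∧ ∑ i, w i = 1 ∧ (∀ i, z i ∈ D) ∧ (∑ i, w i • z i) ∈ D ∧
    gap = (∑ t : Fin n → Fin m, (∏ j, w (t j)) * φ ((n : ℝ)⁻¹ • ∑ j, z (t j)))
      - φ (∑ i, w i • z i)}

lemma sum_pi_prod {k m : ℕ} (F : Fin k → Fin m → ℝ) :
    ∑ t : Fin k → Fin m, ∏ j, F j (t j) = ∏ j, ∑ i, F j i := by
  rw [Finset.prod_univ_sum]
  rw [Fintype.piFinset_univ]

lemma marg1 {k m : ℕ} (w h : Fin m → ℝ) (hw1 : ∑ i, w i = 1) (j0 : Fin k) :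
    ∑ t : Fin k → Fin m, (∏ j, w (t j)) * h (t j0) = ∑ i, w i * h i := by
  have key : ∀ t : Fin k → Fin m, (∏ j, w (t j)) * h (t j0)
      = ∏ j, (w (t j) * if j = j0 then h (t j) else 1) := by
    intro t
    rw [Finset.prod_mul_distrib, Finset.prod_ite_eq' Finset.univ j0 (fun j => h (t j))]
    simp
  rw [Finset.sum_congr rfl (fun t _ => key t), sum_pi_prod (fun j i => w i * if j = j0 then h i else 1)]
  have : ∀ j : Fin k, (∑ i, w i * if j = j0 then h i else 1)
      = if j = j0 then ∑ i, w i * h i else 1 := by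
    intro j
    by_cases hj : j = j0 <;> simp [hj, hw1]
  rw [Finset.prod_congr rfl (fun j _ => this j),
    Finset.prod_ite_eq' Finset.univ j0 (fun _ => ∑ i, w i * h i)]
  simp

lemma marg2 {k m : ℕ} (w g h : Fin m → ℝ) (hw1 : ∑ i, w i = 1) {j0 j1 : Fin k}
    (hne : j0 ≠ j1) :
    ∑ t : Fin k → Fin m, (∏ j, w (t j)) * (g (t j0) * h (t j1))
      = (∑ i, w i * g i) * (∑ i, w i * h i) := by
  have key : ∀ t : Fin k → Fin m, (∏ j, w (t j)) * (g (t j0) * h (t j1))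
      = ∏ j, (w (t j) * ((if j = j0 then g (t j) else 1) * (if j = j1 then h (t j) else 1))) := by
    intro t
    rw [Finset.prod_mul_distrib, Finset.prod_mul_distrib,
      Finset.prod_ite_eq' Finset.univ j0 (fun j => g (t j)),
      Finset.prod_ite_eq' Finset.univ j1 (fun j => h (t j))]
    simp
  rw [Finset.sum_congr rfl (fun t _ => key t),
    sum_pi_prod (fun j i => w i * ((if j = j0 then g i else 1) * (if j = j1 then h i else 1)))]
  have : ∀ j : Fin k, (∑ i, w i * ((if j = j0 then g i else 1) * (if j = j1 then h i else 1)))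
      = (if j = j0 then ∑ i, w i * g i else 1) * (if j = j1 then ∑ i, w i * h i else 1) := by
    intro j
    by_cases hj : j = j0
    · have h2 : j ≠ j1 := hj ▸ hne
      simp [hj, h2, hne]
    · by_cases hj' : j = j1 <;> simp [hj, hj', hw1, hne.symm]
  rw [Finset.prod_congr rfl (fun j _ => this j), Finset.prod_mul_distrib,
    Finset.prod_ite_eq' Finset.univ j0 (fun _ => ∑ i, w i * g i),
    Finset.prod_ite_eq' Finset.univ j1 (fun _ => ∑ i, w i * h i)]
  simp

lemma sumW_one {k m : ℕ} (w : Fin m → ℝ) (hw1 : ∑ i, w i = 1) :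
    ∑ t : Fin k → Fin m, (∏ j, w (t j)) = 1 := by
  rw [sum_pi_prod (fun _ i => w i)]
  simp [hw1]

lemma secmom {k m : ℕ} (w y : Fin m → ℝ) (hw1 : ∑ i, w i = 1)
    (hy : ∑ i, w i * y i = 0) :
    ∑ t : Fin k → Fin m, (∏ j, w (t j)) * (∑ j, y (t j))^2
      = k * ∑ i, w i * (y i)^2 := by
  have expand : ∀ t : Fin k → Fin m,
      (∏ j, w (t j)) * (∑ j, y (t j))^2
        = ∑ j0 : Fin k, ∑ j1 : Fin k, (∏ j, w (t j)) * (y (t j0) * y (t j1)) := by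
    intro t
    rw [sq, Finset.sum_mul_sum, Finset.mul_sum]
    exact Finset.sum_congr rfl (fun j0 _ => by rw [Finset.mul_sum])
  rw [Finset.sum_congr rfl (fun t _ => expand t), Finset.sum_comm]
  rw [Finset.sum_congr rfl (fun j0 _ => Finset.sum_comm)]
  have inner : ∀ j0 : Fin k,
      ∑ j1 : Fin k, ∑ t : Fin k → Fin m, (∏ j, w (t j)) * (y (t j0) * y (t j1))
        = ∑ i, w i * (y i)^2 := by
    intro j0
    have per : ∀ j1 : Fin k,
        ∑ t : Fin k → Fin m, (∏ j, w (t j)) * (y (t j0) * y (t j1))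
          = if j1 = j0 then ∑ i, w i * (y i)^2 else 0 := by
      intro j1
      by_cases hj : j1 = j0
      · subst hj
        rw [if_pos rfl]
        rw [marg1 w (fun i => y i * y i) hw1 j1]
        exact Finset.sum_congr rfl (fun i _ => by ring)
      · rw [if_neg hj, marg2 w y y hw1 (fun hh => hj hh.symm), hy]
        ring
    rw [Finset.sum_congr rfl (fun j1 _ => per j1), Finset.sum_ite_eq' Finset.univ j0]
    simp
  rw [Finset.sum_congr rfl (fun j0 _ => inner j0)]
  simp [mul_comm]

lemma taylor_mul_log {L x μ : ℝ} (hL : 0 < L) (hx : L ≤ x) (hμ : L ≤ μ) :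
    x * log x ≤ μ * log μ + (log μ + 1) * (x - μ) + (x - μ)^2 / (2 * L) := by
  set F : ℝ → ℝ := fun y => (y - μ)^2 / (2*L) + μ * log μ + (log μ + 1) * (y - μ) - y * log y
    with hF
  have hderiv : ∀ y : ℝ, 0 < y → HasDerivAt F ((y - μ)/L - log y + log μ) y := by
    intro y hy
    have h1 : HasDerivAt (fun y : ℝ => (y - μ)^2 / (2*L)) ((y - μ)/L) y := by
      have : HasDerivAt (fun y : ℝ => (y - μ)^2) (2 * (y - μ)) y := by
        have := ((hasDerivAt_id y).sub_const μ).pow 2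
        simp at this; exact this
      have := this.div_const (2*L)
      refine this.congr_deriv ?_
      field_simp
    have h2 : HasDerivAt (fun y : ℝ => μ * log μ + (log μ + 1) * (y - μ)) (log μ + 1) y := by
      have := (((hasDerivAt_id y).sub_const μ).const_mul (log μ + 1)).const_add (μ * log μ)
      simpa using this
    have h3 : HasDerivAt (fun y : ℝ => y * log y) (log y + 1) y :=
      Real.hasDerivAt_mul_log (ne_of_gt hy)
    have h4 := (h1.add h2).sub h3
    have heq : F = fun x => (x - μ)^2/(2*L) + (μ*log μ + (log μ+1)*(x-μ)) - x*log x := by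
      funext y; simp only [hF]; ring
    rw [heq]
    refine h4.congr_deriv ?_
    ring
  have hFμ : F μ = 0 := by simp only [hF]; ring
  have main : ∀ z : ℝ, L ≤ z → 0 ≤ F z := by
    intro z hz
    rcases le_total μ z with hmz | hzm
    · -- monotone on Icc μ z
      have hmono : MonotoneOn F (Set.Icc μ z) := by
        apply monotoneOn_of_deriv_nonneg (convex_Icc μ z)
        · intro y hy
          exact ((hderiv y (lt_of_lt_of_le hL (le_trans hμ hy.1))).continuousAt).continuousWithinAt
        · intro y hy
          rw [interior_Icc] at hy
          exact ((hderiv y (lt_of_lt_of_le hL (le_trans hμ (le_of_lt hy.1)))).differentiableAt).differentiableWithinAt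
        · intro y hy
          rw [interior_Icc] at hy
          have hy0 : 0 < y := lt_of_lt_of_le hL (le_trans hμ (le_of_lt hy.1))
          rw [((hderiv y hy0).deriv)]
          have hlog : log y - log μ ≤ (y - μ)/L := by
            have h1 : log y - log μ = log (y / μ) := by
              rw [Real.log_div (ne_of_gt hy0) (ne_of_gt (lt_of_lt_of_le hL hμ))]
            have h2 : log (y / μ) ≤ y / μ - 1 :=
              Real.log_le_sub_one_of_pos (div_pos hy0 (lt_of_lt_of_le hL hμ))
            have h3 : y / μ - 1 = (y - μ) / μ := by
              rw [sub_div, div_self (ne_of_gt (lt_of_lt_of_le hL hμ))]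
            have h4 : (y - μ)/μ ≤ (y - μ)/L := by
              apply div_le_div_of_nonneg_left (by linarith [hy.1]) hL hμ
            linarith [h1 ▸ (h3 ▸ h2)]
          linarith
      have := hmono (Set.left_mem_Icc.mpr hmz) (Set.right_mem_Icc.mpr hmz) hmz
      linarith [hFμ ▸ this]
    · -- antitone on Icc z μ
      have hanti : AntitoneOn F (Set.Icc z μ) := by
        apply antitoneOn_of_deriv_nonpos (convex_Icc z μ)
        · intro y hy
          exact ((hderiv y (lt_of_lt_of_le hL (le_trans hz hy.1))).continuousAt).continuousWithinAt
        · intro y hy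
          rw [interior_Icc] at hy
          exact ((hderiv y (lt_of_lt_of_le hL (le_trans hz (le_of_lt hy.1)))).differentiableAt).differentiableWithinAt
        · intro y hy
          rw [interior_Icc] at hy
          have hy0 : 0 < y := lt_of_lt_of_le hL (le_trans hz (le_of_lt hy.1))
          rw [((hderiv y hy0).deriv)]
          have hmu0 : 0 < μ := lt_of_lt_of_le hL hμ
          have hlog : log μ - log y ≤ (μ - y)/L := by
            have h1 : log μ - log y = log (μ / y) := by
              rw [Real.log_div (ne_of_gt hmu0) (ne_of_gt hy0)]
            have h2 : log (μ / y) ≤ μ / y - 1 :=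
              Real.log_le_sub_one_of_pos (div_pos hmu0 hy0)
            have h3 : μ / y - 1 = (μ - y) / y := by
              rw [sub_div, div_self (ne_of_gt hy0)]
            have hyL : L ≤ y := le_trans hz (le_of_lt hy.1)
            have h4 : (μ - y)/y ≤ (μ - y)/L := by
              apply div_le_div_of_nonneg_left (by linarith [hy.2]) hL hyL
            linarith [h1 ▸ (h3 ▸ h2)]
          have hr : (y - μ)/L = -((μ - y)/L) := by ring
          linarith
      have := hanti (Set.left_mem_Icc.mpr hzm) (Set.right_mem_Icc.mpr hzm) hzm
      linarith [hFμ ▸ this]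
  have := main x hx
  simp only [hF] at this
  linarith

lemma popoviciu {m : ℕ} (w h : Fin m → ℝ) (L U : ℝ) (hw : ∀ i, 0 ≤ w i)
    (hw1 : ∑ i, w i = 1) (hh : ∀ i, h i ∈ Set.Icc L U) :
    ∑ i, w i * (h i - ∑ i', w i' * h i')^2 ≤ (U - L)^2 / 4 := by
  set M := ∑ i', w i' * h i' with hM
  have step1 : ∑ i, w i * (h i - M)^2
      ≤ ∑ i, ((L+U) * (w i * h i) - L*U*(w i) - 2*M*(w i * h i) + M^2 * (w i)) := by
    apply Finset.sum_le_sum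
    intro i _
    have h1 := (hh i).1
    have h2 := (hh i).2
    have h3 : 0 ≤ (h i - L) * (U - h i) := mul_nonneg (by linarith) (by linarith)
    nlinarith [hw i, mul_le_mul_of_nonneg_left h3 (hw i)]
  have step2 : ∑ i, ((L+U) * (w i * h i) - L*U*(w i) - 2*M*(w i * h i) + M^2 * (w i))
      = (L+U)*M - L*U - 2*M*M + M^2 := by
    rw [Finset.sum_add_distrib, Finset.sum_sub_distrib, Finset.sum_sub_distrib,
      ← Finset.mul_sum, ← Finset.mul_sum, ← Finset.mul_sum, ← Finset.mul_sum, hw1, ← hM]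
    ring
  nlinarith [step1, step2, sq_nonneg (U + L - 2*M)]

lemma oneDim {k m : ℕ} (hk : 0 < k) (w h : Fin m → ℝ) (L U : ℝ) (hL : 0 < L)
    (hw : ∀ i, 0 ≤ w i) (hw1 : ∑ i, w i = 1) (hh : ∀ i, h i ∈ Set.Icc L U) :
    ∑ t : Fin k → Fin m, (∏ j, w (t j)) *
        (((k:ℝ)⁻¹ * ∑ j, h (t j)) * log ((k:ℝ)⁻¹ * ∑ j, h (t j)))
      ≤ (∑ i, w i * h i) * log (∑ i, w i * h i) + (U - L)^2/(8 * L * k) := by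
  set M := ∑ i, w i * h i with hM
  have hk0 : (0:ℝ) < k := by exact_mod_cast hk
  have hWnn : ∀ t : Fin k → Fin m, 0 ≤ ∏ j, w (t j) :=
    fun t => Finset.prod_nonneg (fun j _ => hw (t j))
  have hML : L ≤ M := by
    have : ∑ i, w i * L ≤ M := Finset.sum_le_sum (fun i _ =>
      mul_le_mul_of_nonneg_left (hh i).1 (hw i))
    rw [← Finset.sum_mul, hw1, one_mul] at this
    exact this
  have hxL : ∀ t : Fin k → Fin m, L ≤ (k:ℝ)⁻¹ * ∑ j, h (t j) := by
    intro t
    have : (k:ℝ) * L ≤ ∑ j, h (t j) := by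
      calc (k:ℝ) * L = ∑ _j : Fin k, L := by simp [mul_comm]
      _ ≤ _ := Finset.sum_le_sum (fun j _ => (hh (t j)).1)
    rw [inv_mul_eq_div, le_div_iff₀ hk0, mul_comm]
    exact this
  -- Taylor bound per t
  have taylor : ∀ t : Fin k → Fin m,
      ((k:ℝ)⁻¹ * ∑ j, h (t j)) * log ((k:ℝ)⁻¹ * ∑ j, h (t j))
        ≤ M * log M + (log M + 1) * (((k:ℝ)⁻¹ * ∑ j, h (t j)) - M)
          + (((k:ℝ)⁻¹ * ∑ j, h (t j)) - M)^2 / (2 * L) :=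
    fun t => taylor_mul_log hL (hxL t) hML
  have hsum : ∑ t : Fin k → Fin m, (∏ j, w (t j)) *
        (((k:ℝ)⁻¹ * ∑ j, h (t j)) * log ((k:ℝ)⁻¹ * ∑ j, h (t j)))
      ≤ ∑ t : Fin k → Fin m, (∏ j, w (t j)) *
        (M * log M + (log M + 1) * (((k:ℝ)⁻¹ * ∑ j, h (t j)) - M)
          + (((k:ℝ)⁻¹ * ∑ j, h (t j)) - M)^2 / (2 * L)) :=
    Finset.sum_le_sum (fun t _ => mul_le_mul_of_nonneg_left (taylor t) (hWnn t))
  -- moment computations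
  have m0 : ∑ t : Fin k → Fin m, (∏ j, w (t j)) = 1 := sumW_one w hw1
  have m1 : ∑ t : Fin k → Fin m, (∏ j, w (t j)) * (∑ j, h (t j)) = k * M := by
    have : ∀ t : Fin k → Fin m, (∏ j, w (t j)) * (∑ j, h (t j))
        = ∑ j0 : Fin k, (∏ j, w (t j)) * h (t j0) := fun t => Finset.mul_sum _ _ _
    rw [Finset.sum_congr rfl (fun t _ => this t), Finset.sum_comm]
    rw [Finset.sum_congr rfl (fun j0 _ => marg1 w h hw1 j0)]
    simp [hM, mul_comm]
  have m2 : ∑ t : Fin k → Fin m, (∏ j, w (t j)) * (∑ j, (h (t j) - M))^2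
      = k * ∑ i, w i * (h i - M)^2 := by
    apply secmom w (fun i => h i - M) hw1
    rw [Finset.sum_congr rfl (fun i _ => mul_sub (w i) (h i) M), Finset.sum_sub_distrib,
      ← Finset.sum_mul, hw1, ← hM]
    ring
  have key2 : ∑ t : Fin k → Fin m, (∏ j, w (t j)) * (((k:ℝ)⁻¹ * ∑ j, h (t j)) - M)^2
      ≤ (U - L)^2/(4 * k) := by
    have expand : ∀ t : Fin k → Fin m, (((k:ℝ)⁻¹ * ∑ j, h (t j)) - M)^2
        = ((k:ℝ)⁻¹)^2 * (∑ j, (h (t j) - M))^2 := by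
      intro t
      have : ∑ j : Fin k, (h (t j) - M) = (∑ j, h (t j)) - k * M := by
        rw [Finset.sum_sub_distrib]
        simp [mul_comm]
      rw [this]
      field_simp
    have : ∑ t : Fin k → Fin m, (∏ j, w (t j)) * (((k:ℝ)⁻¹ * ∑ j, h (t j)) - M)^2
        = ((k:ℝ)⁻¹)^2 * (k * ∑ i, w i * (h i - M)^2) := by
      rw [← m2, Finset.mul_sum]
      exact Finset.sum_congr rfl (fun t _ => by rw [expand t]; ring)
    rw [this]
    have hpop := popoviciu w h L U hw hw1 hh
    rw [← hM] at hpop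
    have hvar_nn : (0:ℝ) ≤ ∑ i, w i * (h i - M)^2 :=
      Finset.sum_nonneg (fun i _ => mul_nonneg (hw i) (sq_nonneg _))
    rw [div_eq_mul_inv]
    have h1 : ((k:ℝ)⁻¹)^2 * (k * ∑ i, w i * (h i - M)^2)
        = (∑ i, w i * (h i - M)^2) * (k:ℝ)⁻¹ := by
      field_simp
    rw [h1]
    have h2 : (U - L)^2 * (4 * (k:ℝ))⁻¹ = ((U-L)^2/4) * (k:ℝ)⁻¹ := by ring
    rw [h2]
    exact mul_le_mul_of_nonneg_right hpop (by positivity)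
  -- first moment of the mean
  have mx : ∑ t : Fin k → Fin m, (∏ j, w (t j)) * ((k:ℝ)⁻¹ * ∑ j, h (t j)) = M := by
    have pw : ∀ t : Fin k → Fin m, (∏ j, w (t j)) * ((k:ℝ)⁻¹ * ∑ j, h (t j))
        = (k:ℝ)⁻¹ * ((∏ j, w (t j)) * (∑ j, h (t j))) := fun t => by ring
    rw [Finset.sum_congr rfl (fun t _ => pw t), ← Finset.mul_sum, m1]
    field_simp
  have pw2 : ∀ t : Fin k → Fin m,
      (∏ j, w (t j)) * (M * log M + (log M + 1) * (((k:ℝ)⁻¹ * ∑ j, h (t j)) - M)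
          + (((k:ℝ)⁻¹ * ∑ j, h (t j)) - M)^2 / (2 * L))
        = (M * log M) * (∏ j, w (t j))
          + ((log M + 1) * ((∏ j, w (t j)) * ((k:ℝ)⁻¹ * ∑ j, h (t j)))
            - (M * (log M + 1)) * (∏ j, w (t j)))
          + (2*L)⁻¹ * ((∏ j, w (t j)) * (((k:ℝ)⁻¹ * ∑ j, h (t j)) - M)^2) :=
    fun t => by ring
  have sum_eq : ∑ t : Fin k → Fin m,
      (∏ j, w (t j)) * (M * log M + (log M + 1) * (((k:ℝ)⁻¹ * ∑ j, h (t j)) - M)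
          + (((k:ℝ)⁻¹ * ∑ j, h (t j)) - M)^2 / (2 * L))
      = M * log M + (2*L)⁻¹
          * ∑ t : Fin k → Fin m, (∏ j, w (t j)) * (((k:ℝ)⁻¹ * ∑ j, h (t j)) - M)^2 := by
    rw [Finset.sum_congr rfl (fun t _ => pw2 t), Finset.sum_add_distrib,
      Finset.sum_add_distrib, Finset.sum_sub_distrib, ← Finset.mul_sum, ← Finset.mul_sum,
      ← Finset.mul_sum, ← Finset.mul_sum, m0, mx]
    ring
  calc ∑ t : Fin k → Fin m, (∏ j, w (t j)) *
        (((k:ℝ)⁻¹ * ∑ j, h (t j)) * log ((k:ℝ)⁻¹ * ∑ j, h (t j)))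
      ≤ ∑ t : Fin k → Fin m,
        (∏ j, w (t j)) * (M * log M + (log M + 1) * (((k:ℝ)⁻¹ * ∑ j, h (t j)) - M)
          + (((k:ℝ)⁻¹ * ∑ j, h (t j)) - M)^2 / (2 * L)) := hsum
    _ = M * log M + (2*L)⁻¹
          * ∑ t : Fin k → Fin m, (∏ j, w (t j)) * (((k:ℝ)⁻¹ * ∑ j, h (t j)) - M)^2 := sum_eq
    _ ≤ M * log M + (2*L)⁻¹ * ((U - L)^2/(4 * k)) := by
        have := mul_le_mul_of_nonneg_left key2 (by positivity : (0:ℝ) ≤ (2*L)⁻¹)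
        linarith
    _ = M * log M + (U - L)^2/(8 * L * k) := by
        rw [div_eq_mul_inv, div_eq_mul_inv]
        have : ((2*L)⁻¹ * ((U - L)^2 * (4 * (k:ℝ))⁻¹)) = (U - L)^2 * (8 * L * (k:ℝ))⁻¹ := by
          rw [show (8 * L * (k:ℝ)) = (2*L) * (4*(k:ℝ)) by ring, mul_inv]
          ring
        rw [this]

lemma extendProb_castSucc {d : ℕ} (p : Fin d → ℝ) (i : Fin d) :
    extendProb (d+1) p i.castSucc = p i := by
  unfold extendProb
  rw [dif_pos (by simpa using i.isLt)]
  exact congrArg p (Fin.ext (by simp))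

lemma extendProb_last {d : ℕ} (p : Fin d → ℝ) :
    extendProb (d+1) p (Fin.last d) = 1 - ∑ j, p j := by
  unfold extendProb
  rw [dif_neg (by simp)]
  rfl

lemma extendProb_sum_one {d : ℕ} (p : Fin d → ℝ) :
    ∑ l : Fin (d+1), extendProb (d+1) p l = 1 := by
  rw [Fin.sum_univ_castSucc]
  rw [extendProb_last]
  rw [Finset.sum_congr rfl (fun i _ => extendProb_castSucc p i)]
  ring

lemma negEnt_eq {d : ℕ} (p : Fin d → ℝ) :
    negEnt (d+1) p = ∑ l : Fin (d+1), extendProb (d+1) p l * log (extendProb (d+1) p l) := by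
  rw [Fin.sum_univ_castSucc, extendProb_last,
    Finset.sum_congr rfl (fun i _ => by rw [extendProb_castSucc p i])]
  rfl

lemma extendProb_comb {d m : ℕ} (w : Fin m → ℝ) (z : Fin m → Fin d → ℝ)
    (hw1 : ∑ i, w i = 1) (l : Fin (d+1)) :
    extendProb (d+1) (∑ i, w i • z i) l = ∑ i, w i * extendProb (d+1) (z i) l := by
  rcases Fin.eq_castSucc_or_eq_last l with ⟨j, rfl⟩ | rfl
  · rw [extendProb_castSucc]
    have h1 : ∀ i : Fin m, w i * extendProb (d+1) (z i) j.castSucc = w i * z i j := by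
      intro i; rw [extendProb_castSucc]
    rw [Finset.sum_congr rfl (fun i _ => h1 i)]
    simp [Finset.sum_apply]
  · rw [extendProb_last]
    have h2 : ∀ i : Fin m, w i * extendProb (d+1) (z i) (Fin.last d)
        = w i - w i * ∑ jj, z i jj := by
      intro i; rw [extendProb_last]; ring
    rw [Finset.sum_congr rfl (fun i _ => h2 i), Finset.sum_sub_distrib, hw1]
    have h3 : ∑ jj : Fin d, (∑ i, w i • z i) jj = ∑ i, w i * ∑ jj, z i jj := by
      rw [show (∑ jj : Fin d, (∑ i, w i • z i) jj) = ∑ jj : Fin d, ∑ i, w i * z i jj from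
        Finset.sum_congr rfl (fun jj _ => by simp [Finset.sum_apply]), Finset.sum_comm]
      exact Finset.sum_congr rfl (fun i _ => (Finset.mul_sum _ _ _).symm)
    rw [h3]

lemma extendProb_comb2 {d : ℕ} (p p' : Fin d → ℝ) (s t : ℝ) (hst : s + t = 1) (l : Fin (d+1)) :
    extendProb (d+1) (s • p + t • p') l
      = s * extendProb (d+1) p l + t * extendProb (d+1) p' l := by
  have h := extendProb_comb (m := 2) ![s, t] ![p, p'] (by simp [Fin.sum_univ_two, hst]) l
  simpa [Fin.sum_univ_two] using h

lemma hull_bound {d : ℕ} {S : Set (Fin d → ℝ)} {L U : ℝ} {l : Fin (d+1)}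
    (hSb : ∀ p ∈ S, extendProb (d+1) p l ∈ Set.Icc L U) :
    ∀ p ∈ convexHull ℝ S, extendProb (d+1) p l ∈ Set.Icc L U := by
  intro p hp
  have hconv : Convex ℝ {q : Fin d → ℝ | extendProb (d+1) q l ∈ Set.Icc L U} := by
    intro x hx y hy s t hs ht hst
    simp only [Set.mem_setOf_eq] at *
    rw [extendProb_comb2 x y s t hst l]
    exact (convex_Icc L U) hx hy hs ht hst
  exact convexHull_min hSb hconv hp

lemma extendProb_mem_pos {d : ℕ} {p : Fin d → ℝ} (hp : p ∈ redSimplex (d+1)) (l : Fin (d+1)) :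
    0 < extendProb (d+1) p l := by
  rcases Fin.eq_castSucc_or_eq_last l with ⟨j, rfl⟩ | rfl
  · rw [extendProb_castSucc]; exact (hp.1 j).1
  · rw [extendProb_last]
    have h2 : ∑ j : Fin d, p j < 1 := hp.2
    linarith

theorem aux_jensenGap_negEnt_le
    (c : ℕ) (hc : 2 ≤ c)
    (S : Set (Fin (c - 1) → ℝ)) (hS : S ⊆ redSimplex c)
    (a : Fin c → ℝ)
    (ha : ∀ i, IsLUB ((fun p => 1 / extendProb c p i) '' S) (a i))
    (k : ℕ) (hk : 0 < k) :
    sSup {gap : ℝ | ∃ (m : ℕ) (w : Fin m → ℝ) (z : Fin m → (Fin (c-1) → ℝ)),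
      (∀ i, 0 ≤ w i) ∧ ∑ i, w i = 1 ∧ (∀ i, z i ∈ convexHull ℝ S) ∧
      (∑ i, w i • z i) ∈ convexHull ℝ S ∧
      gap = (∑ t : Fin k → Fin m, (∏ j, w (t j)) * negEnt c ((k : ℝ)⁻¹ • ∑ j, z (t j)))
        - negEnt c (∑ i, w i • z i)} ≤
        (1 / (8 * k)) * ∑ i, a i * (1 - ∑ j, 1 / a j) ^ 2 ∧
      (1 / (8 * k)) * ∑ i, a i * (1 - ∑ j, 1 / a j) ^ 2 ≤ (1 / (8 * k)) * ∑ i, a i := by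
  obtain ⟨d, rfl⟩ : ∃ d, c = d + 1 := ⟨c - 1, by omega⟩
  have hkR : (0:ℝ) < k := by exact_mod_cast hk
  -- S is nonempty
  have hSne : S.Nonempty := by
    by_contra hne
    rw [Set.not_nonempty_iff_eq_empty] at hne
    rw [hne] at ha
    have h0 := ha 0
    rw [Set.image_empty] at h0
    have h1 : (a 0 - 1) ∈ upperBounds (∅ : Set ℝ) := by simp [upperBounds]
    have := h0.2 h1
    linarith
  obtain ⟨p₀, hp₀⟩ := hSne
  have hEpos : ∀ p ∈ S, ∀ l, 0 < extendProb (d+1) p l :=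
    fun p hp l => extendProb_mem_pos (hS hp) l
  have hapos : ∀ l, 0 < a l := by
    intro l
    have hub : 1 / extendProb (d+1) p₀ l ≤ a l := (ha l).1 (Set.mem_image_of_mem _ hp₀)
    have he := hEpos p₀ hp₀ l
    calc (0:ℝ) < 1 / extendProb (d+1) p₀ l := by positivity
    _ ≤ a l := hub
  have hlow : ∀ p ∈ S, ∀ l, 1 / a l ≤ extendProb (d+1) p l := by
    intro p hp l
    have hub : 1 / extendProb (d+1) p l ≤ a l := (ha l).1 (Set.mem_image_of_mem _ hp)
    have he := hEpos p hp l
    rw [div_le_iff₀ he] at hub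
    rw [div_le_iff₀ (hapos l)]
    nlinarith
  set s : ℝ := ∑ j, 1 / a j with hsdef
  have hs_nonneg : 0 ≤ s :=
    Finset.sum_nonneg fun l _ => le_of_lt (by have := hapos l; positivity)
  have hs_le_one : s ≤ 1 := by
    calc s ≤ ∑ l, extendProb (d+1) p₀ l := Finset.sum_le_sum (fun l _ => hlow p₀ hp₀ l)
    _ = 1 := extendProb_sum_one p₀
  have hupp : ∀ p ∈ S, ∀ l, extendProb (d+1) p l ≤ 1 / a l + (1 - s) := by
    intro p hp l
    have hsum := extendProb_sum_one (d := d) p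
    have hErase : extendProb (d+1) p l
        = 1 - ∑ j ∈ Finset.univ.erase l, extendProb (d+1) p j := by
      rw [← hsum, ← Finset.add_sum_erase Finset.univ _ (Finset.mem_univ l)]
      ring
    have h2 : ∑ j ∈ Finset.univ.erase l, (1 / a j)
        ≤ ∑ j ∈ Finset.univ.erase l, extendProb (d+1) p j :=
      Finset.sum_le_sum (fun j _ => hlow p hp j)
    have h3 : s = 1 / a l + ∑ j ∈ Finset.univ.erase l, (1 / a j) := by
      rw [hsdef, ← Finset.add_sum_erase Finset.univ _ (Finset.mem_univ l)]
    rw [hErase]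
    linarith
  have hIcc : ∀ (l : Fin (d+1)), ∀ p ∈ convexHull ℝ S,
      extendProb (d+1) p l ∈ Set.Icc (1 / a l) (1 / a l + (1 - s)) := by
    intro l
    exact hull_bound (fun p hp => ⟨hlow p hp l, hupp p hp l⟩)
  have hBnn : 0 ≤ (1 / (8 * (k:ℝ))) * ∑ i, a i * (1 - s)^2 := by
    apply mul_nonneg (by positivity)
    exact Finset.sum_nonneg fun i _ => mul_nonneg (le_of_lt (hapos i)) (sq_nonneg _)
  constructor
  · apply Real.sSup_le _ hBnn
    rintro x ⟨m, w, z, hwnn, hw1, hzS, hμS, rfl⟩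
    set q : Fin m → Fin (d+1) → ℝ := fun i l => extendProb (d+1) (z i) l with hq
    have hxbar : ∀ (t : Fin k → Fin m) (l : Fin (d+1)),
        extendProb (d+1) ((k:ℝ)⁻¹ • ∑ j, z (t j)) l = (k:ℝ)⁻¹ * ∑ j, q (t j) l := by
      intro t l
      rw [show ((k:ℝ)⁻¹ • ∑ j : Fin k, z (t j)) = ∑ j : Fin k, (k:ℝ)⁻¹ • z (t j) from
        Finset.smul_sum]
      rw [extendProb_comb (d := d) (fun _ => (k:ℝ)⁻¹) (fun j => z (t j))
        (by simp [Finset.sum_const, Finset.card_univ, nsmul_eq_mul,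
          mul_inv_cancel₀ (ne_of_gt hkR)]) l]
      rw [← Finset.mul_sum]
    have hmu : ∀ l : Fin (d+1), extendProb (d+1) (∑ i, w i • z i) l = ∑ i, w i * q i l :=
      fun l => extendProb_comb w z hw1 l
    have rewrite1 : ∑ t : Fin k → Fin m, (∏ j, w (t j)) * negEnt (d+1) ((k:ℝ)⁻¹ • ∑ j, z (t j))
        = ∑ l : Fin (d+1), ∑ t : Fin k → Fin m, (∏ j, w (t j)) *
            (((k:ℝ)⁻¹ * ∑ j, q (t j) l) * log ((k:ℝ)⁻¹ * ∑ j, q (t j) l)) := by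
      have pw : ∀ t : Fin k → Fin m,
          (∏ j, w (t j)) * negEnt (d+1) ((k:ℝ)⁻¹ • ∑ j, z (t j))
            = ∑ l : Fin (d+1), (∏ j, w (t j)) *
                (((k:ℝ)⁻¹ * ∑ j, q (t j) l) * log ((k:ℝ)⁻¹ * ∑ j, q (t j) l)) := by
        intro t
        rw [negEnt_eq, Finset.mul_sum]
        exact Finset.sum_congr rfl (fun l _ => by rw [hxbar t l])
      rw [Finset.sum_congr rfl (fun t _ => pw t), Finset.sum_comm]
    have rewrite2 : negEnt (d+1) (∑ i, w i • z i)
        = ∑ l : Fin (d+1), (∑ i, w i * q i l) * log (∑ i, w i * q i l) := by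
      rw [negEnt_eq]
      exact Finset.sum_congr rfl (fun l _ => by rw [hmu l])
    have perl : ∀ l : Fin (d+1), ∑ t : Fin k → Fin m, (∏ j, w (t j)) *
          (((k:ℝ)⁻¹ * ∑ j, q (t j) l) * log ((k:ℝ)⁻¹ * ∑ j, q (t j) l))
        ≤ (∑ i, w i * q i l) * log (∑ i, w i * q i l)
          + (1 / (8 * (k:ℝ))) * (a l * (1 - s)^2) := by
      intro l
      have hL : (0:ℝ) < 1 / a l := by have := hapos l; positivity
      have hhh : ∀ i, q i l ∈ Set.Icc (1 / a l) (1 / a l + (1 - s)) :=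
        fun i => hIcc l (z i) (hzS i)
      have := oneDim hk w (fun i => q i l) (1 / a l) (1 / a l + (1 - s)) hL hwnn hw1 hhh
      have heq : ((1 / a l + (1 - s)) - 1 / a l)^2 / (8 * (1 / a l) * k)
          = (1 / (8 * (k:ℝ))) * (a l * (1 - s)^2) := by
        have hal := hapos l
        field_simp
        ring
      rw [heq] at this
      exact this
    rw [rewrite1, rewrite2]
    have step := Finset.sum_le_sum (fun l (_ : l ∈ Finset.univ) => perl l)
    rw [Finset.sum_add_distrib] at step
    have hB : ∑ l : Fin (d+1), (1 / (8 * (k:ℝ))) * (a l * (1 - s)^2)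
        = (1 / (8 * (k:ℝ))) * ∑ i, a i * (1 - s)^2 := by
      rw [Finset.mul_sum]
    rw [hB] at step
    linarith
  · apply mul_le_mul_of_nonneg_left _ (by positivity)
    apply Finset.sum_le_sum
    intro i _
    have h1 : (1 - s)^2 ≤ 1 := by nlinarith
    nlinarith [le_of_lt (hapos i)]


/-- **Jensen approximation gap of the negative Shannon entropy**: if
`a i = sup_{p ∈ S} 1/p_i` is finite for every class `i` (including the residual class), then
`Gap(k; ψ|_{co S}) ≤ (1/(8k)) Σ_i a_i (1 − Σ_j 1/a_j)² ≤ (1/(8k)) Σ_i a_i`. -/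
theorem jensenGap_negEnt_le
    (c : ℕ) (hc : 2 ≤ c)
    (S : Set (Fin (c - 1) → ℝ)) (hS : S ⊆ redSimplex c)
    (a : Fin c → ℝ)
    (ha : ∀ i, IsLUB ((fun p => 1 / extendProb c p i) '' S) (a i))
    (k : ℕ) (hk : 0 < k) :
    jensenGap k (convexHull ℝ S) (negEnt c) ≤
        (1 / (8 * k)) * ∑ i, a i * (1 - ∑ j, 1 / a j) ^ 2 ∧
      (1 / (8 * k)) * ∑ i, a i * (1 - ∑ j, 1 / a j) ^ 2 ≤ (1 / (8 * k)) * ∑ i, a i := by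
  exact aux_jensenGap_negEnt_le c hc S hS a ha k hk
end
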